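/- For the Meixner polynomials M_n orthogonal with respect to the geometric law (1−p)p^x on ℕ, the squared norm is ∑_{x=0}^∞ M_n(x)² (1−p) p^x = p^{−n} (1−p)^{2n} (n!)². -/

import Mathlib

open Polynomial Finset Nat

/-!
In the binomial basis `C(x, k) = x.choose k` the Meixner polynomials are
`M_n(x) = n! (1-p)^n ∑_k C(n,k) C(x,k) ((p-1)/p)^k`, and their moments against the binomial
polynomials are `∑_x C(x,k) M_n(x) (1-p) p^x = (-1)^n n! C(k,n) ((1-p)/p)^n (p/(1-p))^k`.
Both formulas propagate along the three-term recurrence, because multiplication by `x` acts on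
the binomial basis by `x C(x,k) = (k+1) C(x,k+1) + k C(x,k)`. The moments vanish for `k < n`,
so in `∑_x M_n(x)² (1-p) p^x` only the top coefficient of the expansion survives, giving
`n! (1-p)^n ((p-1)/p)^n · (-1)^n n! = (1-p)^{2n} (n!)² / p^n`.
-/

/-- The Meixner polynomials associated with the geometric distribution
`μ(x) = (1−p)p^x` on `ℕ`: `M₀ = 1`, `M₁` determined by the recurrence
`(p/(1−p)) M_{n+1}(x) = ((p−1)x + (1+p)n + p) M_n(x) − (1−p) n² M_{n−1}(x)`. -/
noncomputable def meixner (p : ℝ) : ℕ → Polynomial ℝ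
  | 0 => 1
  | 1 => C ((1 - p) / p) * (C (p - 1) * X + C p)
  | (n + 2) =>
      C ((1 - p) / p) *
        ((C (p - 1) * X + C ((1 + p) * ((n : ℝ) + 1) + p)) * meixner p (n + 1)
          - C ((1 - p) * ((n : ℝ) + 1) ^ 2) * meixner p n)

theorem Nat.cast_add_one_mul_choose_succ {R : Type*} [CommRing R] (n k : ℕ) :
    ((k : R) + 1) * n.choose (k + 1) = ((n : R) - k) * n.choose k := by
  rcases le_or_gt k n with h | h
  · have := congrArg (Nat.cast (R := R)) (Nat.choose_succ_right_eq n k)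
    push_cast [Nat.cast_sub h] at this
    linear_combination this
  · simp [Nat.choose_eq_zero_of_lt h, Nat.choose_eq_zero_of_lt (h.trans k.lt_succ_self)]

theorem natCast_mul_sum_mul_choose {R : Type*} [CommRing R] (a : ℕ → R) {N : ℕ} (ha : a N = 0)
    (x : ℕ) :
    (x : R) * ∑ k ∈ range (N + 1), a k * x.choose k
      = ∑ k ∈ range (N + 1), k * (a (k - 1) + a k) * x.choose k := by
  have shift : ∑ k ∈ range (N + 1), a k * ((k + 1) * x.choose (k + 1))
      = ∑ k ∈ range (N + 1), k * a (k - 1) * x.choose k := by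
    rw [sum_range_succ, ha, sum_range_succ']
    simp only [Nat.cast_add_one, add_tsub_cancel_right, Nat.cast_zero, zero_mul, add_zero]
    exact sum_congr rfl fun k _ => by ring
  calc (x : R) * ∑ k ∈ range (N + 1), a k * x.choose k
      = ∑ k ∈ range (N + 1), (a k * ((k + 1) * x.choose (k + 1)) + k * a k * x.choose k) :=
        (mul_sum _ _ _).trans <| sum_congr rfl fun k _ => by
          linear_combination -a k * Nat.cast_add_one_mul_choose_succ (R := R) x k
    _ = ∑ k ∈ range (N + 1), k * (a (k - 1) + a k) * x.choose k := by
        rw [sum_add_distrib, shift, ← sum_add_distrib]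
        exact sum_congr rfl fun k _ => by ring

theorem hasSum_choose_mul_geometric {𝕜 : Type*} [NormedField 𝕜] {r : 𝕜} (hr : ‖r‖ < 1)
    (k : ℕ) : HasSum (fun x : ℕ => (x.choose k : 𝕜) * r ^ x) (r ^ k / (1 - r) ^ (k + 1)) := by
  rw [← hasSum_nat_add_iff' k, sum_eq_zero fun i hi => by
    rw [Nat.choose_eq_zero_of_lt (mem_range.1 hi), Nat.cast_zero, zero_mul], sub_zero,
    ← one_div_mul_eq_div]
  have h := (hasSum_choose_mul_geometric_of_norm_lt_one k hr).mul_right (r ^ k)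
  simp only [mul_assoc, ← pow_add] at h
  exact h

/-- For `n = 0` the truncated `n - 1` is harmless: its coefficient `(1 - p) n²` vanishes. -/
theorem meixner_succ (p : ℝ) (n : ℕ) :
    meixner p (n + 1) = C ((1 - p) / p) * ((C (p - 1) * X + C ((1 + p) * n + p)) * meixner p n
      - C ((1 - p) * (n : ℝ) ^ 2) * meixner p (n - 1)) := by
  cases n with
  | zero => simp [meixner]
  | succ n => simp only [meixner, Nat.cast_add_one, add_tsub_cancel_right]

noncomputable def meixnerCoeff (p : ℝ) (n k : ℕ) : ℝ :=
  n ! * n.choose k * (1 - p) ^ n * ((p - 1) / p) ^ k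

theorem meixnerCoeff_of_lt (p : ℝ) {n k : ℕ} (h : n < k) : meixnerCoeff p n k = 0 := by
  simp [meixnerCoeff, Nat.choose_eq_zero_of_lt h]

theorem meixnerCoeff_succ {p : ℝ} (hp : p ≠ 0) (n k : ℕ) :
    meixnerCoeff p (n + 1) k = (1 - p) / p * ((p - 1) * (k * (meixnerCoeff p n (k - 1)
      + meixnerCoeff p n k)) + ((1 + p) * n + p) * meixnerCoeff p n k
      - (1 - p) * n ^ 2 * meixnerCoeff p (n - 1) k) := by
  rcases n with _ | m
  · rcases k with _ | _ | j <;>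
      simp [meixnerCoeff, Nat.choose_succ_succ, hp, mul_div_assoc', div_mul_eq_mul_div]
  rcases k with _ | j
  · simp only [meixnerCoeff, factorial_succ, add_tsub_cancel_right, Nat.choose_zero_right]
    push_cast
    field_simp
    ring
  have pascal (a b : ℕ) : ((a + 1).choose (b + 1) : ℝ) = a.choose b + a.choose (b + 1) := by
    rw [Nat.choose_succ_succ]; push_cast; rfl
  have h₁ := Nat.cast_add_one_mul_choose_succ (R := ℝ) m j
  have h₂ := Nat.cast_add_one_mul_choose_succ (R := ℝ) (m + 1) j
  have key : p * (m + 2) * (m + 2).choose (j + 1) = p * (j + 1) * (m + 1).choose j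
      + ((p - 1) * (j + 1) + (1 + p) * (m + 1) + p) * (m + 1).choose (j + 1)
      - (m + 1) * m.choose (j + 1) := by
    push_cast at h₂
    linear_combination p * (m + 2) * pascal (m + 1) j + (j - m) * pascal m j + h₁ - p * h₂
  simp only [meixnerCoeff, factorial_succ, add_tsub_cancel_right]
  push_cast
  rw [pow_succ _ j, pow_succ (1 - p) (m + 1), pow_succ (1 - p) m]
  generalize ((p - 1) / p) ^ j = r
  generalize (1 - p) ^ m = u
  generalize (m ! : ℝ) = f
  field_simp
  linear_combination f * u * (1 - p) ^ 2 * r * (p - 1) * key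

theorem meixner_eval_eq_sum_choose {p : ℝ} (hp : p ≠ 0) (x : ℕ) :
    ∀ {n N : ℕ}, n ≤ N →
      (meixner p n).eval (x : ℝ) = ∑ k ∈ range (N + 1), meixnerCoeff p n k * x.choose k
  | 0, N, _ => by
    rw [sum_range_succ', sum_eq_zero fun k _ => by rw [meixnerCoeff_of_lt p k.succ_pos, zero_mul]]
    simp [meixner, meixnerCoeff]
  | n + 1, N, hn => by
    rw [meixner_succ]
    simp only [eval_mul, eval_sub, eval_add, eval_C, eval_X]
    rw [meixner_eval_eq_sum_choose hp x (n := n) (N := N) (by omega),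
      meixner_eval_eq_sum_choose hp x (n := n - 1) (N := N) (by omega), add_mul, mul_assoc,
      natCast_mul_sum_mul_choose _ (meixnerCoeff_of_lt p (by omega)), mul_sum, mul_sum, mul_sum,
      ← sum_add_distrib, ← sum_sub_distrib, mul_sum]
    refine sum_congr rfl fun k _ => ?_
    rw [meixnerCoeff_succ hp]
    ring

noncomputable def meixnerMoment (p : ℝ) (n k : ℕ) : ℝ :=
  (-1) ^ n * n ! * k.choose n * ((1 - p) / p) ^ n * (p / (1 - p)) ^ k

theorem meixnerMoment_of_lt (p : ℝ) {n k : ℕ} (h : k < n) : meixnerMoment p n k = 0 := by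
  simp [meixnerMoment, Nat.choose_eq_zero_of_lt h]

theorem meixnerMoment_succ {p : ℝ} (hp : p ≠ 0) (hp1 : 1 - p ≠ 0) (n k : ℕ) :
    meixnerMoment p (n + 1) k = (1 - p) / p * ((p - 1) * ((k + 1) * meixnerMoment p n (k + 1)
      + k * meixnerMoment p n k) + ((1 + p) * n + p) * meixnerMoment p n k
      - (1 - p) * n ^ 2 * meixnerMoment p (n - 1) k) := by
  rcases n with _ | m
  · simp only [meixnerMoment, zero_add, Nat.choose_zero_right, Nat.choose_one_right]
    push_cast
    rw [pow_succ _ k]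
    generalize (p / (1 - p)) ^ k = r
    field_simp
    ring
  have pascal : ((k + 1).choose (m + 1) : ℝ) = k.choose m + k.choose (m + 1) := by
    rw [Nat.choose_succ_succ]; push_cast; rfl
  have h₁ := Nat.cast_add_one_mul_choose_succ (R := ℝ) k (m + 1)
  have h₂ := Nat.cast_add_one_mul_choose_succ (R := ℝ) k m
  have key : ((m : ℝ) + 2) * k.choose (m + 2) = p * (k + 1) * (k + 1).choose (m + 1)
      - ((p - 1) * k + (1 + p) * (m + 1) + p) * k.choose (m + 1) - p * (m + 1) * k.choose m := by
    push_cast at h₁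
    linear_combination h₁ - p * (k + 1) * pascal + p * h₂
  simp only [meixnerMoment, factorial_succ, add_tsub_cancel_right]
  push_cast
  rw [pow_succ _ k, pow_succ ((1 - p) / p) (m + 1), pow_succ ((1 - p) / p) m,
    pow_succ (-1 : ℝ) (m + 1), pow_succ (-1 : ℝ) m]
  generalize (p / (1 - p)) ^ k = r
  generalize ((1 - p) / p) ^ m = q
  generalize (-1 : ℝ) ^ m = s
  generalize (m ! : ℝ) = f
  field_simp
  linear_combination s * f * q * (1 - p) * r * key

theorem hasSum_choose_mul_meixner {p : ℝ} (hp : p ≠ 0) (hp1 : |p| < 1) :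
    ∀ n k : ℕ, HasSum (fun x : ℕ => x.choose k * (meixner p n).eval (x : ℝ) * ((1 - p) * p ^ x))
      (meixnerMoment p n k)
  | 0, k => by
    have h1p : 1 - p ≠ 0 := by linarith [(abs_lt.1 hp1).2]
    have h := (hasSum_choose_mul_geometric (by rwa [Real.norm_eq_abs]) k).mul_left (1 - p)
    rw [show meixnerMoment p 0 k = (1 - p) * (p ^ k / (1 - p) ^ (k + 1)) by
      simp only [meixnerMoment, pow_zero, factorial_zero, Nat.choose_zero_right, Nat.cast_one,
        one_mul, div_pow]
      field_simp
      ring]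
    exact h.congr_fun fun x => by simp only [meixner, eval_one, mul_one]; ring
  | n + 1, k => by
    have h1p : 1 - p ≠ 0 := by linarith [(abs_lt.1 hp1).2]
    have next := hasSum_choose_mul_meixner hp hp1 n (k + 1)
    have same := hasSum_choose_mul_meixner hp hp1 n k
    have prev := hasSum_choose_mul_meixner hp hp1 (n - 1) k
    have h := ((((next.mul_left ((k : ℝ) + 1)).add (same.mul_left (k : ℝ))).mul_left (p - 1)).add
      (same.mul_left ((1 + p) * n + p)) |>.sub (prev.mul_left ((1 - p) * n ^ 2))).mul_left
      ((1 - p) / p)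
    rw [meixnerMoment_succ hp h1p]
    refine h.congr_fun fun x => ?_
    simp only [meixner_succ, eval_mul, eval_sub, eval_add, eval_C, eval_X]
    linear_combination -(1 - p) / p * (p - 1) * (meixner p n).eval (x : ℝ) * ((1 - p) * p ^ x)
      * Nat.cast_add_one_mul_choose_succ (R := ℝ) x k

theorem hasSum_meixner_sq_mul_geometric {p : ℝ} (hp : p ≠ 0) (hp1 : |p| < 1) (n : ℕ) :
    HasSum (fun x : ℕ => (meixner p n).eval (x : ℝ) ^ 2 * (1 - p) * p ^ x)
      (meixnerCoeff p n n * meixnerMoment p n n) := by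
  have h := hasSum_sum fun k (_ : k ∈ range (n + 1)) =>
    (hasSum_choose_mul_meixner hp hp1 n k).mul_left (meixnerCoeff p n k)
  rw [sum_eq_single_of_mem n (self_mem_range_succ n) fun k hk hkn => by
    rw [meixnerMoment_of_lt p (by rw [mem_range] at hk; omega), mul_zero]] at h
  refine h.congr_fun fun x => ?_
  rw [sq]
  nth_rw 1 [meixner_eval_eq_sum_choose hp x le_rfl]
  rw [sum_mul, sum_mul, sum_mul]
  exact sum_congr rfl fun k _ => by ring

theorem meixnerCoeff_mul_meixnerMoment_self {p : ℝ} (hp : p ≠ 0) (n : ℕ) :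
    meixnerCoeff p n n * meixnerMoment p n n = (1 - p) ^ (2 * n) * (n ! : ℝ) ^ 2 / p ^ n := by
  simp only [meixnerCoeff, meixnerMoment, Nat.choose_self, Nat.cast_one, div_pow]
  have sign : (p - 1) ^ n * (-1 : ℝ) ^ n = (1 - p) ^ n := by rw [← mul_pow]; ring
  field_simp
  linear_combination (1 - p) ^ n * sign

/-- The squared norm of the Meixner polynomials with respect to the geometric
law `(1−p)p^x` on `ℕ`: `∑_{x=0}^∞ M_n(x)² (1−p) p^x = p^{−n} (1−p)^{2n} (n!)²`. -/
theorem meixner_norm_sq (p : ℝ) (hp0 : 0 < p) (hp1 : p < 1) (n : ℕ) :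
    ∑' x : ℕ, (meixner p n).eval (x : ℝ) ^ 2 * (1 - p) * p ^ x
      = (1 - p) ^ (2 * n) * (n.factorial : ℝ) ^ 2 / p ^ n := by
  rw [(hasSum_meixner_sq_mul_geometric hp0.ne' (abs_lt.2 ⟨by linarith, hp1⟩) n).tsum_eq,
    meixnerCoeff_mul_meixnerMoment_self hp0.ne']
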